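/- arXiv:2311.04655 — 3 statements merged into one kernel-verified Lean document; each statement's English description precedes it below -/
import Mathlib

section
/- Let G = (A, Ω) be a Müller game and let X ⊆ V be such that A(X) is a subarena and X ∉ Ω. Then Player 1 fully wins G(X) if and only if for every Y ⊊ X such that A(Y) is a subarena that is a 1-trap in G(X), Player 1 fully wins G(Y). -/
open Set

/-- An arena: a finite directed bipartite graph where every vertex has an
outgoing edge.  The vertex set is `V0 ∪ V1` inside the finite type `α`. -/
structure Arena (α : Type) [Fintype α] where
  V0 : Set α
  V1 : Set α
  E : Set (α × α)
  disj : Disjoint V0 V1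
  bipartite : E ⊆ (V0 ×ˢ V1) ∪ (V1 ×ˢ V0)
  succ : ∀ v ∈ V0 ∪ V1, ∃ u, (v, u) ∈ E

variable {α : Type} [Fintype α]

/-- The set of positions of the arena. -/
def Arena.V (A : Arena α) : Set α := A.V0 ∪ A.V1

/-- The positions of Player σ (σ ∈ {0,1}). -/
def Arena.P (A : Arena α) (σ : Fin 2) : Set α := if σ = 0 then A.V0 else A.V1

/-- `A(X)` is a subarena: `X ⊆ V` and every vertex of `X` has an
outgoing edge inside `X`. -/
def Subarena (A : Arena α) (X : Set α) : Prop :=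
  X ⊆ A.V ∧ ∀ v ∈ X, ∃ u ∈ X, (v, u) ∈ A.E

/-- `A(Y)` is a σ-trap of the pseudo-arena `A(X)`: every vertex of
`Y ∩ V_{1-σ}` has an `E`-successor in `Y`, and every vertex of `Y ∩ V_σ`
has all of its `E`-successors inside `X` lying in `Y`.
A σ-trap of `A` itself is `TrapIn A A.V σ Y`. -/
def TrapIn (A : Arena α) (X : Set α) (σ : Fin 2) (Y : Set α) : Prop :=
  Y ⊆ X ∧
  (∀ v ∈ Y ∩ A.P (1 - σ), ∃ u ∈ Y, (v, u) ∈ A.E) ∧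
  (∀ v ∈ Y ∩ A.P σ, ∀ u, (v, u) ∈ A.E → u ∈ X → u ∈ Y)

/-- A play of the (pseudo-)arena `A(X)`: an infinite `E`-path staying in `X`. -/
def IsPlayIn (A : Arena α) (X : Set α) (ρ : ℕ → α) : Prop :=
  ∀ i, ρ i ∈ X ∧ (ρ i, ρ (i + 1)) ∈ A.E

/-- The set of vertices occurring infinitely often in the play `ρ`. -/
def InfOcc (ρ : ℕ → α) : Set α := {v | {i | ρ i = v}.Infinite}

/-- A strategy for Player σ in the game played on the pseudo-arena `A(X)`:
it maps a history (the finite prefix before the current vertex) and the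
current vertex of `V_σ ∩ X` to an `E`-successor inside `X`. -/
structure StrategyIn (A : Arena α) (X : Set α) (σ : Fin 2) where
  move : List α → α → α
  legal : ∀ h v, v ∈ X ∩ A.P σ → (v, move h v) ∈ A.E ∧ move h v ∈ X

/-- A play is consistent with a strategy for Player σ if every move from a
vertex of `V_σ` follows the strategy. -/
def ConsistentIn {A : Arena α} {X : Set α} {σ : Fin 2} (s : StrategyIn A X σ)
    (ρ : ℕ → α) : Prop :=
  ∀ i, ρ i ∈ A.P σ → ρ (i + 1) = s.move (List.ofFn fun j : Fin i => ρ j) (ρ i)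

/-- Player σ wins the game on `A(X)` (with payoff `payoff` describing the
plays won by Player 0) from position `v`. -/
def WinsFrom (A : Arena α) (X : Set α) (payoff : (ℕ → α) → Prop) (σ : Fin 2)
    (v : α) : Prop :=
  ∃ s : StrategyIn A X σ, ∀ ρ, IsPlayIn A X ρ → ρ 0 = v → ConsistentIn s ρ →
    (if σ = 0 then payoff ρ else ¬ payoff ρ)

/-- `Win_σ` of the game on `A(X)`. -/
def WinSet (A : Arena α) (X : Set α) (payoff : (ℕ → α) → Prop) (σ : Fin 2) :
    Set α :=
  {v ∈ X | WinsFrom A X payoff σ v}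

/-- Player σ fully wins the game on `A(X)`. -/
def FullyWins (A : Arena α) (X : Set α) (payoff : (ℕ → α) → Prop)
    (σ : Fin 2) : Prop :=
  ∀ v ∈ X, WinsFrom A X payoff σ v

/-- The attractor `Attr_σ(T, A(X))`: the least `W ⊇ T` containing every
`u ∈ X ∩ V_σ` with some `E`-successor in `W ∩ X` and every
`u ∈ X ∩ V_{1-σ}` all of whose `E`-successors inside `X` lie in `W`. -/
def AttrIn (A : Arena α) (X : Set α) (σ : Fin 2) (T : Set α) : Set α :=
  ⋂₀ {W | T ⊆ W ∧
    (∀ u ∈ X ∩ A.P σ, (∃ w ∈ W ∩ X, (u, w) ∈ A.E) → u ∈ W) ∧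
    (∀ u ∈ X ∩ A.P (1 - σ), (∀ w, (u, w) ∈ A.E → w ∈ X → w ∈ W) → u ∈ W)}

/-- The Müller winning condition: Player 0 wins the play `ρ` iff `Inf(ρ) ∈ Ω`. -/
def MullerPayoff (Ω : Set (Set α)) : (ℕ → α) → Prop := fun ρ => InfOcc ρ ∈ Ω

/-!
Player 1 cannot leave a 1-trap, so a winning strategy of Player 1 on `X` restricts to every 1-trap.
Conversely, Player 1 cycles through targets `τ 0, τ 1, …` that enumerate `X` with infinite
repetitions: in the trap `X \ Attr₁({τ k})` of the current target `τ k` Player 1 follows a winning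
strategy of that trap, outside it the attractor strategy towards `τ k`; once `τ k` is visited the
next target is taken. If the targets advance forever, every position of `X` is visited infinitely
often and the play is lost by Player 0 since `X ∉ Ω`. Otherwise the target is eventually constant,
the attractor strategy keeps the play out of the attractor from then on, and the play ends in one
stay in the trap consistent with its winning strategy; the Müller condition ignores that prefix.
-/

open Filter

namespace Arena

lemma mem_P_or_mem_P_one_sub {A : Arena α} {v : α} (hv : v ∈ A.V) (σ : Fin 2) :
    v ∈ A.P σ ∨ v ∈ A.P (1 - σ) := by
  fin_cases σ <;> simpa [V, P, or_comm] using hv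

end Arena

lemma TrapIn.subarena {A : Arena α} {X Y : Set α} {σ : Fin 2} (hX : Subarena A X)
    (hY : TrapIn A X σ Y) : Subarena A Y := by
  refine ⟨hY.1.trans hX.1, fun v hv => ?_⟩
  rcases Arena.mem_P_or_mem_P_one_sub (hX.1 (hY.1 hv)) σ with hσ | hσ
  · obtain ⟨u, huX, hu⟩ := hX.2 v (hY.1 hv)
    exact ⟨u, hY.2.2 v ⟨hv, hσ⟩ u hu huX, hu⟩
  · exact hY.2.1 v ⟨hv, hσ⟩

section Strategies

variable {A : Arena α} {X Y : Set α} {p : (ℕ → α) → Prop} {σ : Fin 2}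

lemma WinsFrom.of_trapIn {v : α} (hv : WinsFrom A X p σ v) (hY : TrapIn A X σ Y) :
    WinsFrom A Y p σ v := by
  obtain ⟨s, hs⟩ := hv
  refine ⟨⟨s.move, fun h w hw => ?_⟩, fun ρ hρ h0 hcons =>
    hs ρ (fun i => ⟨hY.1 (hρ i).1, (hρ i).2⟩) h0 hcons⟩
  obtain ⟨he, hwX⟩ := s.legal h w ⟨hY.1 hw.1, hw.2⟩
  exact ⟨he, hY.2.2 w hw _ he hwX⟩

lemma FullyWins.of_trapIn (h : FullyWins A X p σ) (hY : TrapIn A X σ Y) : FullyWins A Y p σ :=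
  fun v hv => (h v (hY.1 hv)).of_trapIn hY

/- The single strategy reads the initial vertex off the history and follows the strategy that
wins from it. -/
lemma FullyWins.exists_strategy (h : FullyWins A Y p σ) :
    ∃ s : StrategyIn A Y σ, ∀ ρ, IsPlayIn A Y ρ → ConsistentIn s ρ →
      if σ = 0 then p ρ else ¬ p ρ := by
  classical
  choose s hs using h
  refine ⟨⟨fun hist v => if he : hist.headD v ∈ Y then (s _ he).move hist v
      else if hv : v ∈ Y then (s v hv).move hist v else v, fun hist v hv => ?_⟩,
    fun ρ hρ hcons => hs _ (hρ 0).1 ρ hρ rfl fun i hi => ?_⟩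
  · split_ifs with he hv'
    · exact (s _ he).legal hist v hv
    · exact (s v hv').legal hist v hv
    · exact absurd hv.1 hv'
  · have hhead : (List.ofFn fun j : Fin i => ρ j).headD (ρ i) = ρ 0 := by
      cases i <;> simp [List.ofFn_succ]
    rw [hcons i hi]
    simp only [hhead, dif_pos (hρ 0).1]

end Strategies

section Attractor

variable (A : Arena α) (X T : Set α)

/-- `attrLevel A X T k`: the positions of `X` from which Player 1 can force a visit to `T` within
`k` moves. -/
def attrLevel : ℕ → Set α
  | 0 => T
  | k + 1 => attrLevel k ∪ {v | v ∈ X ∧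
      (v ∈ A.V1 ∧ (∃ w ∈ X, w ∈ attrLevel k ∧ (v, w) ∈ A.E) ∨
        v ∈ A.V0 ∧ ∀ w ∈ X, (v, w) ∈ A.E → w ∈ attrLevel k)}

def attractor : Set α := ⋃ k, attrLevel A X T k

open Classical in
/-- Player 1's attractor strategy: step down one level (any legal move in `X` outside the
attractor). -/
noncomputable def attrMove (v : α) : α :=
  if h : ∃ q : ℕ × α, v ∉ attrLevel A X T q.1 ∧ q.2 ∈ X ∧ q.2 ∈ attrLevel A X T q.1 ∧
    (v, q.2) ∈ A.E then h.choose.2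
  else if h' : ∃ w ∈ X, (v, w) ∈ A.E then h'.choose else v

variable {A X T}

lemma attrLevel_mono : Monotone (attrLevel A X T) :=
  monotone_nat_of_le_succ fun _ => subset_union_left

lemma attrLevel_subset_attractor (k : ℕ) : attrLevel A X T k ⊆ attractor A X T :=
  subset_iUnion (attrLevel A X T) k

lemma mem_attractor_of_V1 {v w : α} (hv : v ∈ X) (hv1 : v ∈ A.V1) (hw : w ∈ X)
    (hwA : w ∈ attractor A X T) (he : (v, w) ∈ A.E) : v ∈ attractor A X T := by
  obtain ⟨k, hk⟩ := mem_iUnion.1 hwA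
  exact attrLevel_subset_attractor (k + 1) (Or.inr ⟨hv, Or.inl ⟨hv1, w, hw, hk, he⟩⟩)

/- The successors of `v` form a finite set, so they all lie in one level. -/
lemma mem_attractor_of_V0 {v : α} (hv : v ∈ X) (hv0 : v ∈ A.V0)
    (hall : ∀ w ∈ X, (v, w) ∈ A.E → w ∈ attractor A X T) : v ∈ attractor A X T := by
  classical
  obtain ⟨k, hk⟩ := attrLevel_mono.directed_le.exists_mem_subset_of_finset_subset_biUnion
    (s := {w | w ∈ X ∧ (v, w) ∈ A.E}.toFinset) fun w hw => by
      simp only [coe_toFinset, mem_ofPred_eq] at hw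
      exact hall w hw.1 hw.2
  exact attrLevel_subset_attractor (k + 1)
    (Or.inr ⟨hv, Or.inr ⟨hv0, fun w hw he => hk (by simp [hw, he])⟩⟩)

lemma diff_attractor_trapIn : TrapIn A X 1 (X \ attractor A X T) := by
  refine ⟨sdiff_subset, fun v ⟨⟨hvX, hvA⟩, hv0⟩ => ?_,
    fun v ⟨⟨hvX, hvA⟩, hv1⟩ u he hu => ⟨hu, fun huA => hvA (mem_attractor_of_V1 hvX hv1 hu huA he)⟩⟩
  by_contra! hstuck
  exact hvA (mem_attractor_of_V0 hvX hv0 fun w hw he => by_contra fun hwA => hstuck w ⟨hw, hwA⟩ he)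

lemma diff_attractor_ssubset {x : α} (hx : x ∈ X) (hxT : x ∈ T) : X \ attractor A X T ⊂ X :=
  ⟨sdiff_subset, fun h => (h hx).2 (attrLevel_subset_attractor 0 hxT)⟩

lemma attrMove_legal (hX : Subarena A X) {v : α} (hv : v ∈ X) :
    (v, attrMove A X T v) ∈ A.E ∧ attrMove A X T v ∈ X := by
  unfold attrMove
  split_ifs with h h'
  · exact ⟨h.choose_spec.2.2.2, h.choose_spec.2.1⟩
  · exact ⟨h'.choose_spec.2, h'.choose_spec.1⟩
  · exact absurd (hX.2 v hv) h'

lemma attrMove_mem_attrLevel {v w : α} {k : ℕ} (hv : v ∈ attrLevel A X T (k + 1))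
    (hvk : v ∉ attrLevel A X T k) (hw : w ∈ X) (hwk : w ∈ attrLevel A X T k)
    (he : (v, w) ∈ A.E) : attrMove A X T v ∈ attrLevel A X T k := by
  have h : ∃ q : ℕ × α, v ∉ attrLevel A X T q.1 ∧ q.2 ∈ X ∧ q.2 ∈ attrLevel A X T q.1 ∧
      (v, q.2) ∈ A.E := ⟨(k, w), hvk, hw, hwk, he⟩
  obtain ⟨hvq, -, hq, -⟩ := h.choose_spec
  have hle : h.choose.1 ≤ k := by
    by_contra! hlt
    exact hvq (attrLevel_mono hlt hv)
  rw [attrMove, dif_pos h]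
  exact attrLevel_mono hle hq

/- Each round lowers the level of the current position, so level `k` is left for `T` within
`k` rounds. -/
lemma IsPlayIn.exists_mem_of_mem_attractor {ρ : ℕ → α} {N i : ℕ} (hρ : IsPlayIn A X ρ)
    (hmove : ∀ m ≥ N, ρ m ∈ attractor A X T → ρ m ∈ A.V1 → ρ (m + 1) = attrMove A X T (ρ m))
    (hi : N ≤ i) (hiA : ρ i ∈ attractor A X T) : ∃ m ≥ i, ρ m ∈ T := by
  obtain ⟨k, hk⟩ := mem_iUnion.1 hiA
  induction k generalizing i with
  | zero => exact ⟨i, le_rfl, hk⟩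
  | succ k ih =>
    by_cases hik : ρ i ∈ attrLevel A X T k
    · exact ih hi (attrLevel_subset_attractor k hik) hik
    have hnext : ρ (i + 1) ∈ attrLevel A X T k := by
      rcases id hk with hk' | ⟨-, ⟨hv1, w, hw, hwk, he⟩ | ⟨-, hall⟩⟩
      · exact absurd hk' hik
      · rw [hmove i hi hiA hv1]
        exact attrMove_mem_attrLevel hk hik hw hwk he
      · exact hall _ (hρ (i + 1)).1 (hρ i).2
    obtain ⟨m, hm, hmT⟩ := ih (by omega) (attrLevel_subset_attractor k hnext) hnext
    exact ⟨m, by omega, hmT⟩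

end Attractor

lemma exists_eq_and_succ_eq_of_lt {c : ℕ → ℕ} (h0 : c 0 = 0) (hstep : ∀ i, c (i + 1) ≤ c i + 1)
    {k : ℕ} (hk : ∃ i, k < c i) : ∃ i, c i = k ∧ c (i + 1) = k + 1 := by
  classical
  obtain ⟨i, hi⟩ : ∃ i, Nat.find hk = i + 1 :=
    Nat.exists_eq_add_one.2 (Nat.pos_of_ne_zero fun h => by simpa [h, h0] using Nat.find_spec hk)
  have hlt := Nat.find_spec hk
  have hle : c i ≤ k := not_lt.1 (Nat.find_min hk (by omega))
  rw [hi] at hlt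
  have := hstep i
  exact ⟨i, by omega, by omega⟩

lemma exists_forall_ge_eq_of_bddAbove {c : ℕ → ℕ} (hc : Monotone c) (hb : BddAbove (range c)) :
    ∃ N, ∀ i ≥ N, c i = c N := by
  obtain ⟨N, hN⟩ := Nat.sSup_mem (range_nonempty c) hb
  exact ⟨N, fun i hi => le_antisymm (hN ▸ le_csSup hb (mem_range_self i)) (hc hi)⟩

lemma ofFn_succ_eq_append {β : Type*} (f : ℕ → β) (n : ℕ) :
    (List.ofFn fun j : Fin (n + 1) => f j) = (List.ofFn fun j : Fin n => f j) ++ [f n] :=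
  List.ofFn_succ_last

lemma infOcc_shift {β : Type} (ρ : ℕ → β) (j : ℕ) : InfOcc (fun q => ρ (j + q)) = InfOcc ρ := by
  ext v
  simp only [InfOcc, mem_ofPred_eq, ← Nat.frequently_atTop_iff_infinite]
  conv_rhs => rw [← map_add_atTop_eq_nat j, frequently_map]
  simp only [add_comm]

lemma IsPlayIn.infOcc_subset {A : Arena α} {X : Set α} {ρ : ℕ → α} (hρ : IsPlayIn A X ρ) :
    InfOcc ρ ⊆ X := fun v hv => by
  obtain ⟨i, rfl⟩ := hv.nonempty
  exact (hρ i).1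

lemma exists_schedule {X : Set α} (hX : X.Nonempty) :
    ∃ τ : ℕ → α, (∀ k, τ k ∈ X) ∧ ∀ x ∈ X, ∀ N, ∃ k ≥ N, τ k = x := by
  obtain ⟨f, hf⟩ := X.toFinite.countable.exists_eq_range hX
  refine ⟨fun k => f k.unpair.1, fun k => hf ▸ mem_range_self _, fun x hx N => ?_⟩
  rw [hf] at hx
  obtain ⟨a, rfl⟩ := hx
  exact ⟨Nat.pair a N, Nat.right_le_pair a N, by simp⟩

section Switching

variable (A : Arena α) (X : Set α) (τ : ℕ → α)

open Classical in
/-- The memory update of the switching strategy. In a state `(k, s)`, `τ k` is the current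
target, which is replaced by the next one once visited, and `s` is the current stay in the trap
`X \ attractor A X {τ k}` (empty outside it). -/
noncomputable def scheduleStep (q : ℕ × List α) (u : α) : ℕ × List α :=
  let k := if u = τ q.1 then q.1 + 1 else q.1
  (k, if u ∈ X \ attractor A X {τ k} then (if u = τ q.1 then [] else q.2) ++ [u] else [])

noncomputable def switchState (h : List α) : ℕ × List α := h.foldl (scheduleStep A X τ) (0, [])

open Classical in
noncomputable def switchStrategy (hX : Subarena A X)
    (σ : ∀ k, StrategyIn A (X \ attractor A X {τ k}) 1) : StrategyIn A X 1 where
  move h v :=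
    let q := switchState A X τ (h ++ [v])
    if v ∈ X \ attractor A X {τ q.1} then (σ q.1).move q.2.dropLast v
    else attrMove A X {τ q.1} v
  legal h v hv := by
    dsimp only
    split_ifs with hY
    · obtain ⟨he, hmem, -⟩ := (σ _).legal _ v ⟨hY, hv.2⟩
      exact ⟨he, hmem⟩
    · exact attrMove_legal hX hv.1

noncomputable def playState (ρ : ℕ → α) (i : ℕ) : ℕ × List α :=
  switchState A X τ (List.ofFn fun j : Fin i => ρ j)

def SettledFrom (ρ : ℕ → α) (T j : ℕ) : Prop :=
  ∀ i ≥ j, ρ i ∈ X \ attractor A X {τ T} ∧ (playState A X τ ρ (i + 1)).1 = T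

variable {A X τ} {ρ : ℕ → α}

lemma scheduleStep_of_ne {k : ℕ} {s : List α} {u : α} (hne : u ≠ τ k)
    (hu : u ∈ X \ attractor A X {τ k}) : scheduleStep A X τ (k, s) u = (k, s ++ [u]) := by
  simp [scheduleStep, hne, hu]

lemma playState_succ (i : ℕ) :
    playState A X τ ρ (i + 1) = scheduleStep A X τ (playState A X τ ρ i) (ρ i) := by
  rw [playState, ofFn_succ_eq_append, switchState, List.foldl_concat]
  rfl

lemma playState_succ_fst_eq_self_iff (i : ℕ) :
    (playState A X τ ρ (i + 1)).1 = (playState A X τ ρ i).1 ↔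
      ρ i ≠ τ (playState A X τ ρ i).1 := by
  rw [playState_succ]
  dsimp only [scheduleStep]
  split_ifs <;> simp_all

lemma playState_succ_fst_le (i : ℕ) :
    (playState A X τ ρ (i + 1)).1 ≤ (playState A X τ ρ i).1 + 1 := by
  rw [playState_succ]
  dsimp only [scheduleStep]
  split_ifs <;> omega

lemma playState_fst_monotone : Monotone fun i => (playState A X τ ρ i).1 :=
  monotone_nat_of_le_succ fun i => by
    rw [playState_succ]
    dsimp only [scheduleStep]
    split_ifs <;> omega

lemma playState_succ_snd_eq_nil {i : ℕ}
    (h : ρ i ∉ X \ attractor A X {τ (playState A X τ ρ (i + 1)).1}) :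
    (playState A X τ ρ (i + 1)).2 = [] := by
  rw [playState_succ] at h ⊢
  exact if_neg h

lemma playState_succ_snd_eq_singleton {i : ℕ}
    (h : ρ i ∈ X \ attractor A X {τ (playState A X τ ρ (i + 1)).1})
    (hfresh : ρ i = τ (playState A X τ ρ i).1 ∨ (playState A X τ ρ i).2 = []) :
    (playState A X τ ρ (i + 1)).2 = [ρ i] := by
  rw [playState_succ] at h ⊢
  refine (if_pos h).trans ?_
  rcases hfresh with h' | h' <;> simp [h']

lemma mem_infOcc_of_not_bddAbove (hτ : ∀ x ∈ X, ∀ N, ∃ k ≥ N, τ k = x)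
    (hub : ¬ BddAbove (range fun i => (playState A X τ ρ i).1)) {x : α} (hx : x ∈ X) :
    x ∈ InfOcc ρ := by
  refine Nat.frequently_atTop_iff_infinite.1 (frequently_atTop.2 fun N => ?_)
  obtain ⟨k, hk, rfl⟩ := hτ x hx (playState A X τ ρ N).1
  obtain ⟨i, hik, hik1⟩ := exists_eq_and_succ_eq_of_lt (c := fun i => (playState A X τ ρ i).1)
    rfl playState_succ_fst_le (by simpa using not_bddAbove_iff.1 hub k)
  refine ⟨i, ?_, ?_⟩
  · by_contra! hiN
    have := playState_fst_monotone (A := A) (X := X) (τ := τ) (ρ := ρ) (show i + 1 ≤ N by omega)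
    simp only at this
    omega
  · by_contra hne
    have := (playState_succ_fst_eq_self_iff i).2 (hik ▸ hne)
    omega

/- The trap's strategy is run on the stay from its first position, so `N` is moved back to the
time at which the stay began. -/
lemma SettledFrom.exists_fresh {T : ℕ} :
    ∀ {N : ℕ}, SettledFrom A X τ ρ T N →
      ∃ j, SettledFrom A X τ ρ T j ∧ (playState A X τ ρ (j + 1)).2 = [ρ j]
  | 0, h => ⟨0, h, playState_succ_snd_eq_singleton (by rw [(h 0 le_rfl).2]; exact (h 0 le_rfl).1)
      (Or.inr rfl)⟩
  | N + 1, h => by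
    by_cases hN : ρ N ∈ X \ attractor A X {τ T} ∧ (playState A X τ ρ (N + 1)).1 = T
    · exact SettledFrom.exists_fresh fun i hi =>
        (Nat.eq_or_lt_of_le hi).elim (fun h' => h' ▸ hN) fun hi' => h i hi'
    refine ⟨N + 1, h, playState_succ_snd_eq_singleton
      (by rw [(h _ le_rfl).2]; exact (h _ le_rfl).1) (or_iff_not_imp_left.2 fun hne => ?_)⟩
    have hc : (playState A X τ ρ (N + 1)).1 = T :=
      ((playState_succ_fst_eq_self_iff _).2 hne).symm.trans (h _ le_rfl).2
    exact playState_succ_snd_eq_nil (by rw [hc]; exact fun hY => hN ⟨hY, hc⟩)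

lemma SettledFrom.playState_eq {T j : ℕ} (h : SettledFrom A X τ ρ T j)
    (hfresh : (playState A X τ ρ (j + 1)).2 = [ρ j]) (q : ℕ) :
    playState A X τ ρ (j + q + 1) = (T, List.ofFn fun r : Fin (q + 1) => ρ (j + r)) := by
  induction q with
  | zero => exact Prod.ext (h j le_rfl).2 (by simpa using hfresh)
  | succ q ih =>
    have hne : ρ (j + q + 1) ≠ τ T := by
      rw [← (h (j + q) (by omega)).2]
      exact (playState_succ_fst_eq_self_iff _).1
        (by rw [(h (j + q) (by omega)).2, (h (j + q + 1) (by omega)).2])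
    rw [show j + (q + 1) + 1 = j + q + 1 + 1 by omega, playState_succ, ih,
      scheduleStep_of_ne hne (h (j + q + 1) (by omega)).1,
      ofFn_succ_eq_append (fun r => ρ (j + r)) (q + 1)]
    rfl

variable {hX : Subarena A X} {σ : ∀ k, StrategyIn A (X \ attractor A X {τ k}) 1}

open Classical in
lemma switchStrategy_move_ofFn (i : ℕ) :
    (switchStrategy A X τ hX σ).move (List.ofFn fun j : Fin i => ρ j) (ρ i) =
      if ρ i ∈ X \ attractor A X {τ (playState A X τ ρ (i + 1)).1} then
        (σ (playState A X τ ρ (i + 1)).1).move (playState A X τ ρ (i + 1)).2.dropLast (ρ i)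
      else attrMove A X {τ (playState A X τ ρ (i + 1)).1} (ρ i) := by
  rw [playState, ofFn_succ_eq_append]
  rfl

lemma ConsistentIn.next_eq_trap_move (hcons : ConsistentIn (switchStrategy A X τ hX σ) ρ) {i : ℕ}
    (hi : ρ i ∈ A.V1) (hY : ρ i ∈ X \ attractor A X {τ (playState A X τ ρ (i + 1)).1}) :
    ρ (i + 1) =
      (σ (playState A X τ ρ (i + 1)).1).move (playState A X τ ρ (i + 1)).2.dropLast (ρ i) := by
  rw [hcons i hi, switchStrategy_move_ofFn, if_pos hY]

lemma ConsistentIn.next_eq_attrMove (hcons : ConsistentIn (switchStrategy A X τ hX σ) ρ) {i : ℕ}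
    (hi : ρ i ∈ A.V1) (hY : ρ i ∉ X \ attractor A X {τ (playState A X τ ρ (i + 1)).1}) :
    ρ (i + 1) = attrMove A X {τ (playState A X τ ρ (i + 1)).1} (ρ i) := by
  rw [hcons i hi, switchStrategy_move_ofFn, if_neg hY]

/- Once the target stays `τ T`, the play can no longer visit it, so the attractor strategy
keeps it out of the attractor of `τ T`. -/
lemma ConsistentIn.settledFrom (hcons : ConsistentIn (switchStrategy A X τ hX σ) ρ)
    (hρ : IsPlayIn A X ρ) {N T : ℕ} (hN : ∀ i ≥ N, (playState A X τ ρ i).1 = T) :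
    SettledFrom A X τ ρ T N := by
  have hne : ∀ i ≥ N, ρ i ≠ τ T := fun i hi => by
    rw [← hN i hi, ← playState_succ_fst_eq_self_iff, hN i hi, hN (i + 1) (by omega)]
  have hmove : ∀ m ≥ N, ρ m ∈ attractor A X {τ T} → ρ m ∈ A.V1 →
      ρ (m + 1) = attrMove A X {τ T} (ρ m) := fun m hm hmA hm1 => by
    rw [hcons.next_eq_attrMove hm1 (by rw [hN (m + 1) (by omega)]; exact fun h => h.2 hmA),
      hN (m + 1) (by omega)]
  refine fun i hi => ⟨⟨(hρ i).1, fun hA => ?_⟩, hN (i + 1) (by omega)⟩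
  obtain ⟨m, hm, hmT⟩ := hρ.exists_mem_of_mem_attractor hmove hi hA
  exact hne m (by omega) hmT

lemma ConsistentIn.exists_suffix (hcons : ConsistentIn (switchStrategy A X τ hX σ) ρ)
    (hρ : IsPlayIn A X ρ) {N T : ℕ} (hN : ∀ i ≥ N, (playState A X τ ρ i).1 = T) :
    ∃ j, IsPlayIn A (X \ attractor A X {τ T}) (fun q => ρ (j + q)) ∧
      ConsistentIn (σ T) (fun q => ρ (j + q)) := by
  obtain ⟨j, hj, hfresh⟩ := (hcons.settledFrom hρ hN).exists_fresh
  refine ⟨j, fun q => ⟨(hj (j + q) (by omega)).1, (hρ (j + q)).2⟩, fun q hq => ?_⟩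
  have hstate := hj.playState_eq hfresh q
  have hnext := hcons.next_eq_trap_move hq (by rw [hstate]; exact (hj (j + q) (by omega)).1)
  rw [hstate, ofFn_succ_eq_append (fun r => ρ (j + r)), List.dropLast_concat] at hnext
  exact hnext

end Switching

theorem fullyWins_one_of_forall_ssubset_trapIn {A : Arena α} {X : Set α} {Ω : Set (Set α)}
    (hX : Subarena A X) (hmem : X ∉ Ω)
    (H : ∀ Y, Y ⊂ X → Subarena A Y → TrapIn A X 1 Y → FullyWins A Y (MullerPayoff Ω) 1) :
    FullyWins A X (MullerPayoff Ω) 1 := by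
  intro v hv
  obtain ⟨τ, hτX, hτ⟩ := exists_schedule ⟨v, hv⟩
  choose σ hσ using fun k => (H _ (diff_attractor_ssubset (hτX k) (mem_singleton (τ k)))
    (diff_attractor_trapIn.subarena hX) diff_attractor_trapIn).exists_strategy
  refine ⟨switchStrategy A X τ hX σ, fun ρ hρ _ hcons => ?_⟩
  show ¬ MullerPayoff Ω ρ
  by_cases hbdd : BddAbove (range fun i => (playState A X τ ρ i).1)
  · obtain ⟨N, hN⟩ := exists_forall_ge_eq_of_bddAbove playState_fst_monotone hbdd
    obtain ⟨j, hplay, hcons'⟩ := hcons.exists_suffix hρ hN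
    simpa [MullerPayoff, infOcc_shift] using hσ _ _ hplay hcons'
  · have hInf : InfOcc ρ = X :=
      hρ.infOcc_subset.antisymm fun x hx => mem_infOcc_of_not_bddAbove hτ hbdd hx
    exact fun h => hmem (hInf ▸ h)

/-- Corollary 4.6: for a subarena `A(X)` with `X ∉ Ω`, Player 1
fully wins `G(X)` iff Player 1 fully wins `G(Y)` for every proper subarena
`A(Y)` that is a 1-trap in `G(X)`. -/
theorem stmt4 (A : Arena α) (Ω : Set (Set α)) (X : Set α)
    (hX : Subarena A X) (hmem : X ∉ Ω) :
    FullyWins A X (MullerPayoff Ω) 1 ↔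
      ∀ Y, Y ⊂ X → Subarena A Y → TrapIn A X 1 Y →
        FullyWins A Y (MullerPayoff Ω) 1 :=
  ⟨fun h _ _ _ hY => h.of_trapIn hY, fullyWins_one_of_forall_ssubset_trapIn hX hmem⟩
end

section
/- Let G = (A, Ω) be a Müller game and let A(X) and A(Y) be subarenas that are both 1-traps in A. If Player 0 fully wins G(X) and Player 0 fully wins G(Y), then A(X ∪ Y) is a subarena that is a 1-trap and Player 0 fully wins G(X ∪ Y). -/
open Set

variable {α : Type} [Fintype α]

lemma key_lemma (A : Arena α) (Ω : Set (Set α)) (Z W : Set α)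
    (hZW : Z ⊆ W) (hZt : TrapIn A A.V 1 Z) (hWsub : Subarena A W)
    (h0Z : FullyWins A Z (MullerPayoff Ω) 0) :
    ∀ v ∈ Z, WinsFrom A W (MullerPayoff Ω) 0 v := by
  intro v hv
  obtain ⟨sZ, hsZ⟩ := h0Z v hv
  classical
  refine ⟨⟨fun h u => if hu : u ∈ Z then sZ.move h u
      else if hu' : u ∈ W then (hWsub.2 u hu').choose else u, ?_⟩, ?_⟩
  · intro h u hu
    by_cases huZ : u ∈ Z
    · simp only [dif_pos huZ]
      have := sZ.legal h u ⟨huZ, hu.2⟩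
      exact ⟨this.1, hZW this.2⟩
    · have huW : u ∈ W := hu.1
      simp only [dif_neg huZ, dif_pos huW]
      obtain ⟨hw, he⟩ := (hWsub.2 u huW).choose_spec
      exact ⟨he, hw⟩
  · intro ρ hρ h0 hcons
    -- the play stays in Z
    have hinZ : ∀ i, ρ i ∈ Z := by
      intro i
      induction i with
      | zero => rw [h0]; exact hv
      | succ i ih =>
        have hV : ρ i ∈ A.V0 ∪ A.V1 := hZt.1 ih
        rcases hV with h0v | h1v
        · have hP : ρ i ∈ A.P 0 := by simp [Arena.P, h0v]
          have := hcons i hP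
          rw [this]
          simp only [dif_pos ih]
          exact (sZ.legal _ _ ⟨ih, hP⟩).2
        · have hP : ρ i ∈ A.P 1 := by simp [Arena.P, h1v]
          have hedge := (hρ i).2
          have hVnext : ρ (i+1) ∈ A.V := by
            rcases A.bipartite hedge with h | h
            · exact Or.inr h.2
            · exact Or.inl h.2
          exact hZt.2.2 (ρ i) ⟨ih, hP⟩ (ρ (i+1)) hedge hVnext
    have hplayZ : IsPlayIn A Z ρ := fun i => ⟨hinZ i, (hρ i).2⟩
    have hconsZ : ConsistentIn sZ ρ := by
      intro i hP
      have := hcons i hP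
      rw [this]; exact dif_pos (hinZ i)
    have := hsZ ρ hplayZ h0 hconsZ
    simpa using this

/-- Lemma 4.9: if `A(X)` and `A(Y)` are subarenas that are
1-traps and Player 0 fully wins `G(X)` and `G(Y)`, then `A(X ∪ Y)` is a
subarena that is a 1-trap and Player 0 fully wins `G(X ∪ Y)`. -/
theorem stmt7 (A : Arena α) (Ω : Set (Set α)) (X Y : Set α)
    (hX : Subarena A X) (hY : Subarena A Y)
    (hXt : TrapIn A A.V 1 X) (hYt : TrapIn A A.V 1 Y)
    (h0X : FullyWins A X (MullerPayoff Ω) 0)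
    (h0Y : FullyWins A Y (MullerPayoff Ω) 0) :
    Subarena A (X ∪ Y) ∧ TrapIn A A.V 1 (X ∪ Y) ∧
      FullyWins A (X ∪ Y) (MullerPayoff Ω) 0 := by
  
  classical
  have hVU : X ∪ Y ⊆ A.V := union_subset hX.1 hY.1
  have hsub : Subarena A (X ∪ Y) := by
    refine ⟨hVU, ?_⟩
    rintro v (hvX | hvY)
    · obtain ⟨u, hu, he⟩ := hX.2 v hvX
      exact ⟨u, Or.inl hu, he⟩
    · obtain ⟨u, hu, he⟩ := hY.2 v hvY
      exact ⟨u, Or.inr hu, he⟩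
  refine ⟨hsub, ⟨hVU, ?_, ?_⟩, ?_⟩
  · rintro v ⟨(hvX | hvY), hP⟩
    · obtain ⟨u, hu, he⟩ := hXt.2.1 v ⟨hvX, hP⟩
      exact ⟨u, Or.inl hu, he⟩
    · obtain ⟨u, hu, he⟩ := hYt.2.1 v ⟨hvY, hP⟩
      exact ⟨u, Or.inr hu, he⟩
  · rintro v ⟨(hvX | hvY), hP⟩ u he hu
    · exact Or.inl (hXt.2.2 v ⟨hvX, hP⟩ u he hu)
    · exact Or.inr (hYt.2.2 v ⟨hvY, hP⟩ u he hu)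
  · rintro v (hvX | hvY)
    · exact key_lemma A Ω X (X ∪ Y) subset_union_left hXt hsub h0X v hvX
    · exact key_lemma A Ω Y (X ∪ Y) subset_union_right hYt hsub h0Y v hvY
end

section
/- Let G = (A, Ω) be a Müller game and σ ∈ {0,1}, and let Y = Win_{1−σ}(G). If Y is nonempty, then A(Y) is a subarena that is a σ-trap in A and Player 1−σ fully wins G(Y). -/
open Set

variable {α : Type} [Fintype α]

def prep (v : α) (ρ : ℕ → α) : ℕ → α := fun n => match n with | 0 => v | n+1 => ρ n

lemma infOcc_prep (v : α) (ρ : ℕ → α) : InfOcc (prep v ρ) = InfOcc ρ := by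
  ext x
  simp only [InfOcc, mem_setOf_eq]
  constructor
  · intro h
    have hsub : {i | prep v ρ i = x} ⊆ insert 0 ((· + 1) '' {i | ρ i = x}) := by
      intro n hn
      match n with
      | 0 => exact mem_insert _ _
      | k+1 => exact Or.inr ⟨k, hn, rfl⟩
    have h2 : (insert 0 ((· + 1) '' {i | ρ i = x})).Infinite := h.mono hsub
    have h3 : ((· + 1) '' {i | ρ i = x}).Infinite := by
      refine (h2.diff (Set.finite_singleton 0)).mono ?_
      rintro n ⟨hn | hn, hn0⟩
      · exact absurd hn (by simpa using hn0)
      · exact hn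
    exact h3.of_image _
  · intro h
    have h2 : ((· + 1) '' {i | ρ i = x}).Infinite :=
      h.image (fun a b hab => by omega)
    refine h2.mono ?_
    rintro n ⟨k, hk, rfl⟩
    exact hk

lemma mem_V_of_E {A : Arena α} {v w : α} (h : (v, w) ∈ A.E) : v ∈ A.V ∧ w ∈ A.V := by
  rcases A.bipartite h with h' | h'
  · exact ⟨Or.inl h'.1, Or.inr h'.2⟩
  · exact ⟨Or.inr h'.1, Or.inl h'.2⟩

lemma P_disj (A : Arena α) (σ : Fin 2) : ∀ x, x ∈ A.P σ → x ∉ A.P (1 - σ) := by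
  have : σ = 0 ∨ σ = 1 := by omega
  rcases this with rfl | rfl
  · have : (1 - 0 : Fin 2) = 1 := by decide
    rw [this]
    simp only [Arena.P, if_pos rfl, if_neg (by decide : (1:Fin 2) ≠ 0)]
    exact fun x hx => Set.disjoint_left.mp A.disj hx
  · have : (1 - 1 : Fin 2) = 0 := by decide
    rw [this]
    simp only [Arena.P, if_pos rfl, if_neg (by decide : (1:Fin 2) ≠ 0)]
    exact fun x hx => Set.disjoint_right.mp A.disj hx

def WinsVia (A : Arena α) (pay : (ℕ → α) → Prop) (τ : Fin 2)
    (s : StrategyIn A A.V τ) (v : α) : Prop :=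
  ∀ ρ, IsPlayIn A A.V ρ → ρ 0 = v → ConsistentIn s ρ →
    (if τ = 0 then pay ρ else ¬ pay ρ)

def shiftS {A : Arena α} {X : Set α} {τ : Fin 2} (p : List α)
    (s : StrategyIn A X τ) : StrategyIn A X τ where
  move h v := s.move (p ++ h) v
  legal h v hv := s.legal (p ++ h) v hv

lemma winsVia_congr {A : Arena α} {pay : (ℕ → α) → Prop} {τ : Fin 2}
    {s1 s2 : StrategyIn A A.V τ} {v : α}
    (hm : ∀ h w, s1.move h w = s2.move h w) (h : WinsVia A pay τ s1 v) :
    WinsVia A pay τ s2 v := by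
  intro ρ hρ h0 hc
  exact h ρ hρ h0 (fun i hi => (hc i hi).trans (hm _ _).symm)

lemma ofFn_prep (v : α) (ρ : ℕ → α) (k : ℕ) :
    (List.ofFn fun j : Fin (k+1) => prep v ρ j) = v :: List.ofFn fun j : Fin k => ρ j := by
  rw [List.ofFn_succ]
  rfl

lemma winsVia_step {A : Arena α} {Ω : Set (Set α)} {τ : Fin 2}
    {s : StrategyIn A A.V τ} {v w : α} (hv : v ∈ A.V)
    (hwin : WinsVia A (MullerPayoff Ω) τ s v)
    (hE : (v, w) ∈ A.E)
    (hcons : v ∈ A.P τ → w = s.move [] v) :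
    WinsVia A (MullerPayoff Ω) τ (shiftS [v] s) w := by
  intro ρ hρ hρ0 hρc
  have hplay : IsPlayIn A A.V (prep v ρ) := by
    intro i
    match i with
    | 0 => exact ⟨hv, by simpa [prep, hρ0] using hE⟩
    | k+1 => exact ⟨(hρ k).1, (hρ k).2⟩
  have hc : ConsistentIn s (prep v ρ) := by
    intro i hi
    match i with
    | 0 =>
      show ρ 0 = _
      rw [hρ0, hcons hi]
      congr 1
    | k+1 =>
      have h2 := hρc k hi
      show ρ (k+1) = _
      rw [h2, ofFn_prep]
      rfl
  have := hwin (prep v ρ) hplay rfl hc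
  have hio : MullerPayoff Ω (prep v ρ) ↔ MullerPayoff Ω ρ := by
    simp [MullerPayoff, infOcc_prep]
  split_ifs at this ⊢ with h
  · exact hio.mp this
  · exact fun hh => this (hio.mpr hh)

lemma mem_winSet {A : Arena α} {pay : (ℕ → α) → Prop} {τ : Fin 2}
    {w : α} (s : StrategyIn A A.V τ) (h1 : w ∈ A.V) (h2 : WinsVia A pay τ s w) :
    w ∈ WinSet A A.V pay τ := ⟨h1, s, h2⟩

lemma winSet_spec {A : Arena α} {pay : (ℕ → α) → Prop} {τ : Fin 2} {v : α}
    (h : v ∈ WinSet A A.V pay τ) :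
    v ∈ A.V ∧ ∃ s : StrategyIn A A.V τ, WinsVia A pay τ s v := h

open Classical in
noncomputable def patched {A : Arena α} {τ : Fin 2} (Y : Set α)
    (s : StrategyIn A A.V τ) (d : α → α) : List α → α → α :=
  fun h w => if (w, s.move h w) ∈ A.E ∧ s.move h w ∈ Y then s.move h w else d w

/-- if `Y = Win_{1-σ}(G)` is nonempty, then `A(Y)` is a
subarena that is a σ-trap in `A` and Player `1-σ` fully wins `G(Y)`. -/
theorem stmt11 (A : Arena α) (Ω : Set (Set α)) (σ : Fin 2)
    (hne : (WinSet A A.V (MullerPayoff Ω) (1 - σ)).Nonempty) :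
    Subarena A (WinSet A A.V (MullerPayoff Ω) (1 - σ)) ∧
      TrapIn A A.V σ (WinSet A A.V (MullerPayoff Ω) (1 - σ)) ∧
      FullyWins A (WinSet A A.V (MullerPayoff Ω) (1 - σ)) (MullerPayoff Ω)
        (1 - σ) := by
  classical
  have hστ : ∀ x, x ∈ A.P σ → x ∉ A.P (1 - σ) := P_disj A σ
  have hYV : WinSet A A.V (MullerPayoff Ω) (1 - σ) ⊆ A.V := fun v hv => (winSet_spec hv).1
  -- every vertex of Y has a successor in Y
  have hsucc : ∀ v ∈ WinSet A A.V (MullerPayoff Ω) (1 - σ),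
      ∃ u ∈ WinSet A A.V (MullerPayoff Ω) (1 - σ), (v, u) ∈ A.E := by
    intro v hv
    obtain ⟨hvV, s, hs⟩ := winSet_spec hv
    by_cases hvτ : v ∈ A.P (1 - σ)
    · obtain ⟨hE, hVw⟩ := s.legal [] v ⟨hvV, hvτ⟩
      exact ⟨s.move [] v,
        mem_winSet _ hVw (winsVia_step hvV hs hE (fun _ => rfl)), hE⟩
    · obtain ⟨u, hu⟩ := A.succ v hvV
      exact ⟨u, mem_winSet _ (mem_V_of_E hu).2
        (winsVia_step hvV hs hu (fun h => absurd h hvτ)), hu⟩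
  -- trap property
  have htrap : ∀ v ∈ WinSet A A.V (MullerPayoff Ω) (1 - σ) ∩ A.P σ,
      ∀ u, (v, u) ∈ A.E → u ∈ A.V → u ∈ WinSet A A.V (MullerPayoff Ω) (1 - σ) := by
    rintro v ⟨hv, hvσ⟩ u hE huV
    obtain ⟨hvV, s, hs⟩ := winSet_spec hv
    exact mem_winSet _ huV (winsVia_step hvV hs hE (fun h => absurd h (hστ v hvσ)))
  refine ⟨⟨hYV, hsucc⟩, ⟨hYV, fun v hv => hsucc v hv.1, htrap⟩, ?_⟩
  -- fully wins the restricted game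
  intro v hv
  obtain ⟨hvV, s, hs⟩ := winSet_spec hv
  -- default successor inside Y
  have hch : ∀ w : α, ∃ u : α, w ∈ WinSet A A.V (MullerPayoff Ω) (1 - σ) →
      u ∈ WinSet A A.V (MullerPayoff Ω) (1 - σ) ∧ (w, u) ∈ A.E := by
    intro w
    by_cases hw : w ∈ WinSet A A.V (MullerPayoff Ω) (1 - σ)
    · obtain ⟨u, hu1, hu2⟩ := hsucc w hw
      exact ⟨u, fun _ => ⟨hu1, hu2⟩⟩
    · exact ⟨w, fun h => absurd h hw⟩
  choose d hd using hch
  refine ⟨⟨patched (WinSet A A.V (MullerPayoff Ω) (1 - σ)) s d, ?_⟩, ?_⟩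
  · intro h w hw
    unfold patched
    split_ifs with hc
    · exact ⟨hc.1, hc.2⟩
    · exact ⟨(hd w hw.1).2, (hd w hw.1).1⟩
  · intro ρ hρ hρ0 hρc
    have hρY : ∀ i, ρ i ∈ WinSet A A.V (MullerPayoff Ω) (1 - σ) := fun i => (hρ i).1
    have hρV : IsPlayIn A A.V ρ := fun i => ⟨hYV (hρ i).1, (hρ i).2⟩
    have hagree : ∀ i,
        WinsVia A (MullerPayoff Ω) (1 - σ) (shiftS (List.ofFn fun j : Fin i => ρ j) s) (ρ i) →
        ρ i ∈ A.P (1 - σ) →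
        ρ (i + 1) = s.move (List.ofFn fun j : Fin i => ρ j) (ρ i) := by
      intro i ki hi
      set p := (List.ofFn fun j : Fin i => ρ j) with hp
      obtain ⟨hE, hVw⟩ := (shiftS p s).legal [] (ρ i) ⟨hYV (hρY i), hi⟩
      have hmv : (shiftS p s).move [] (ρ i) = s.move p (ρ i) := by
        show s.move (p ++ []) (ρ i) = s.move p (ρ i)
        rw [List.append_nil]
      rw [hmv] at hE hVw
      have hwinw := winsVia_step (hYV (hρY i)) ki hE (fun _ => hmv.symm)
      have hwY : s.move p (ρ i) ∈ WinSet A A.V (MullerPayoff Ω) (1 - σ) :=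
        mem_winSet _ hVw hwinw
      have h1 := hρc i hi
      rw [h1]
      show patched _ s d p (ρ i) = s.move p (ρ i)
      unfold patched
      rw [if_pos ⟨hE, hwY⟩]
    have key : ∀ i,
        WinsVia A (MullerPayoff Ω) (1 - σ) (shiftS (List.ofFn fun j : Fin i => ρ j) s) (ρ i) := by
      intro i
      induction i with
      | zero =>
        refine winsVia_congr (s1 := s) (fun h w => ?_) ?_
        · show s.move h w = s.move ((List.ofFn fun j : Fin 0 => ρ j) ++ h) w
          simp
        · rw [hρ0]; exact hs
      | succ k ih =>
        have hE : (ρ k, ρ (k + 1)) ∈ A.E := (hρ k).2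
        have hmv : (shiftS (List.ofFn fun j : Fin k => ρ j) s).move [] (ρ k)
            = s.move (List.ofFn fun j : Fin k => ρ j) (ρ k) := by
          show s.move (_ ++ []) (ρ k) = _
          rw [List.append_nil]
        have hcons : ρ k ∈ A.P (1 - σ) →
            ρ (k + 1) = (shiftS (List.ofFn fun j : Fin k => ρ j) s).move [] (ρ k) :=
          fun hk => (hagree k ih hk).trans hmv.symm
        have hst := winsVia_step (hYV (hρY k)) ih hE hcons
        refine winsVia_congr (fun h w => ?_) hst
        show s.move ((List.ofFn fun j : Fin k => ρ j) ++ ([ρ k] ++ h)) w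
          = s.move ((List.ofFn fun j : Fin (k + 1) => ρ j) ++ h) w
        congr 1
        rw [List.ofFn_succ']
        simp [List.concat_eq_append, List.append_assoc]
    have hconsS : ConsistentIn s ρ := fun i hi => hagree i (key i) hi
    exact hs ρ hρV hρ0 hconsS
end
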